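/- arXiv:1706.04515 — 4 statements merged into one kernel-verified Lean document; each statement's English description precedes it below -/
import Mathlib

section
/- Let k ≥ 3 be an integer, let μ_k be the set of k-th roots of unity in ℂ, and let ζ = exp(2πi/k). If a_1, ..., a_n ∈ μ_k ∪ {0} satisfy a_1 + ... + a_n = n - 1 + ζ, then there exists exactly one index j with a_j = ζ, and a_i = 1 for all i ≠ j. -/
/-!
Put `ζ = exp(iθ)` with `θ = 2π/k` and test everything against the real-linear functional
`L z = Re (z · conj (1 + ζ))`, whose level line `L = L 1 = L ζ` is the chord through `1` and `ζ`.
Since `θ < π`, every other point of `μ_k ∪ {0}` lies strictly on the side of the origin: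
for `a = exp(iφ)` with `θ < φ < 2π`,
`L 1 - L a = 4 sin(φ/2) sin((φ-θ)/2) cos(θ/2) > 0`.
As `L (n - 1 + ζ) = n · L 1`, each `a i` must lie on the chord, i.e. be `1` or `ζ`,
and then the sum forces exactly one of them to be `ζ`.
-/

open Complex ComplexConjugate Finset

lemma Real.one_add_cos_sub_cos_sub_cos (x y : ℝ) :
    1 + Real.cos (2 * y) - Real.cos (2 * x) - Real.cos (2 * x - 2 * y)
      = 4 * Real.sin x * Real.sin (x - y) * Real.cos y := by
  obtain ⟨u, rfl⟩ : ∃ u, x = u + y := ⟨x - y, by ring⟩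
  rw [show 2 * (u + y) - 2 * y = 2 * u by ring, add_sub_cancel_right]
  simp only [Real.cos_two_mul, Real.cos_add, Real.sin_add]
  linear_combination (-2 * Real.cos y ^ 2 - 2) * Real.sin_sq_add_cos_sq u
    - 2 * Real.sin u ^ 2 * Real.sin_sq_add_cos_sq y

lemma Real.cos_add_cos_sub_lt_one_add_cos {θ φ : ℝ} (hθ : 0 < θ) (hθπ : θ < Real.pi)
    (hθφ : θ < φ) (hφ : φ < 2 * Real.pi) :
    Real.cos φ + Real.cos (φ - θ) < 1 + Real.cos θ := by
  have key := Real.one_add_cos_sub_cos_sub_cos (φ / 2) (θ / 2)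
  rw [show 2 * (θ / 2) = θ by ring, show 2 * (φ / 2) = φ by ring] at key
  have h₁ : 0 < Real.sin (φ / 2) := Real.sin_pos_of_pos_of_lt_pi (by linarith) (by linarith)
  have h₂ : 0 < Real.sin (φ / 2 - θ / 2) :=
    Real.sin_pos_of_pos_of_lt_pi (by linarith) (by linarith)
  have h₃ : 0 < Real.cos (θ / 2) := Real.cos_pos_of_mem_Ioo ⟨by linarith, by linarith⟩
  have := mul_pos (mul_pos (mul_pos four_pos h₁) h₂) h₃
  linarith

lemma Real.one_add_cos_pos {θ : ℝ} (h₁ : -Real.pi < θ) (h₂ : θ < Real.pi) :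
    0 < 1 + Real.cos θ := by
  have h := Real.cos_sq (θ / 2)
  rw [show 2 * (θ / 2) = θ by ring] at h
  have : 0 < Real.cos (θ / 2) := Real.cos_pos_of_mem_Ioo ⟨by linarith, by linarith⟩
  nlinarith

lemma Complex.re_exp_mul_conj_one_add_exp (φ θ : ℝ) :
    (exp (φ * I) * conj (1 + exp (θ * I))).re = Real.cos φ + Real.cos (φ - θ) := by
  simp [mul_re, exp_ofReal_mul_I_re, exp_ofReal_mul_I_im, Real.cos_sub]
  ring

lemma Complex.re_mul_conj_one_add_self {ζ : ℂ} (hζ : ‖ζ‖ = 1) :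
    (ζ * conj (1 + ζ)).re = (1 + ζ).re := by
  rw [map_add, map_one, mul_add, mul_one, mul_conj, normSq_eq_norm_sq, hζ]
  simp [add_comm]

lemma Complex.eq_one_or_eq_exp_or_re_mul_conj_lt {k : ℕ} (hk : 3 ≤ k) {a : ℂ}
    (ha : a = 0 ∨ a ^ k = 1) :
    a = 1 ∨ a = exp (2 * Real.pi * I / k) ∨
      (a * conj (1 + exp (2 * Real.pi * I / k))).re < (1 + exp (2 * Real.pi * I / k)).re := by
  set θ : ℝ := 2 * Real.pi / k with hθ
  have hζ : exp (2 * Real.pi * I / k) = exp (θ * I) := by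
    rw [hθ]; congr 1; push_cast; ring
  have hk₀ : (0 : ℝ) < k := by positivity
  have hθ₀ : 0 < θ := by positivity
  have hθπ : θ < Real.pi := by
    have : (3 : ℝ) ≤ k := by exact_mod_cast hk
    rw [hθ, div_lt_iff₀ hk₀]; nlinarith [Real.pi_pos]
  have hre : (1 + exp (θ * I)).re = 1 + Real.cos θ := by simp [exp_ofReal_mul_I_re]
  rw [hζ, hre]
  rcases ha with rfl | ha
  · right; right
    rw [zero_mul, zero_re]
    exact Real.one_add_cos_pos (by linarith) hθπ
  have : NeZero k := ⟨by omega⟩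
  obtain ⟨j, hjk, rfl⟩ := (isPrimitiveRoot_exp k (by omega)).eq_pow_of_pow_eq_one ha
  rw [hζ, ← exp_nat_mul, show (j : ℂ) * (θ * I) = ((j * θ : ℝ) : ℂ) * I by push_cast; ring]
  match j, hjk with
  | 0, _ => left; simp
  | 1, _ => right; left; simp
  | j + 2, hjk =>
    right; right
    rw [re_exp_mul_conj_one_add_exp]
    refine Real.cos_add_cos_sub_lt_one_add_cos hθ₀ hθπ ?_ ?_
    · push_cast; nlinarith
    · have : ((j + 2 : ℕ) : ℝ) < k := by exact_mod_cast hjk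
      calc ((j + 2 : ℕ) : ℝ) * θ < k * θ := by gcongr
        _ = 2 * Real.pi := by rw [hθ]; field_simp

lemma existsUnique_eq_of_sum_eq_card_sub_one_add {ι R : Type*} [Fintype ι] [Field R]
    [CharZero R] {a : ι → R} {ζ : R} (hζ : ζ ≠ 1) (ha : ∀ i, a i = 1 ∨ a i = ζ)
    (hsum : ∑ i, a i = Fintype.card ι - 1 + ζ) :
    ∃! j, a j = ζ ∧ ∀ i, i ≠ j → a i = 1 := by
  classical
  have hdiff : ∀ i, a i - 1 = (if a i = ζ then 1 else 0) * (ζ - 1) := by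
    intro i
    rcases ha i with h | h <;> simp [h, hζ.symm]
  have hcard : #{i | a i = ζ} = 1 := by
    have h : ∑ i, (a i - 1) = ζ - 1 := by
      rw [sum_sub_distrib, hsum, sum_const, card_univ, nsmul_one]; ring
    rw [sum_congr rfl fun i _ => hdiff i, ← sum_mul, sum_boole] at h
    exact_mod_cast mul_right_cancel₀ (sub_ne_zero.2 hζ) (h.trans (one_mul _).symm)
  obtain ⟨j, hj⟩ := card_eq_one.1 hcard
  have hmem : ∀ i, a i = ζ ↔ i = j := fun i => by
    simpa using congrArg (i ∈ ·) hj
  refine ⟨j, ⟨(hmem j).2 rfl, fun i hi => (ha i).resolve_right (mt (hmem i).1 hi)⟩, ?_⟩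
  exact fun i hi => (hmem i).1 hi.1

/-- Let `k ≥ 3`, and `ζ = exp(2πi/k)`. If `a 1, …, a n` are each `0` or
a `k`-th root of unity and their sum is `n - 1 + ζ`, then there is exactly one index `j`
with `a j = ζ`, and `a i = 1` for all `i ≠ j`. -/
theorem stmt0 (k n : ℕ) (hk : 3 ≤ k) (a : Fin n → ℂ)
    (ha : ∀ i, a i = 0 ∨ a i ^ k = 1)
    (hsum : ∑ i, a i = (n : ℂ) - 1 + Complex.exp (2 * Real.pi * Complex.I / k)) :
    ∃! j, a j = Complex.exp (2 * Real.pi * Complex.I / k) ∧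
      ∀ i, i ≠ j → a i = 1 := by
  set ζ := exp (2 * Real.pi * I / k)
  set L : ℂ → ℝ := fun z => (z * conj (1 + ζ)).re
  have hζ : ‖ζ‖ = 1 := by simpa using (isPrimitiveRoot_exp k (by omega)).norm'_eq_one (by omega)
  have hLζ : L ζ = L 1 := by simp only [L, re_mul_conj_one_add_self hζ, one_mul, conj_re]
  have hcases := fun i => eq_one_or_eq_exp_or_re_mul_conj_lt hk (ha i)
  have hle : ∀ i ∈ univ, L (a i) ≤ L 1 := fun i _ => by
    rcases hcases i with h | h | h
    · rw [h]
    · rw [h, hLζ]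
    · simpa [L] using h.le
  have hLsum : ∑ i, L (a i) = ∑ _i : Fin n, L 1 := by
    simp only [L, ← re_sum, ← sum_mul, hsum, sum_const, card_univ, Fintype.card_fin]
    rw [add_mul, add_re, show (ζ * conj (1 + ζ)).re = _ from hLζ]
    simp [L, sub_mul]
    ring
  have hon : ∀ i, L (a i) = L 1 := fun i => (sum_eq_sum_iff_of_le hle).1 hLsum i (mem_univ i)
  refine existsUnique_eq_of_sum_eq_card_sub_one_add
    ((isPrimitiveRoot_exp k (by omega)).ne_one (by omega)) (fun i => ?_) (by simpa using hsum)
  rcases hcases i with h | h | h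
  · exact .inl h
  · exact .inr h
  · exact absurd (hon i) (by simpa [L] using h.ne)
end

section
/- Let K be a nonarchimedean local field with residue field of cardinality q = p^f (p prime). Then p is the unique prime ℓ such that the quotient O_K^* / tors(O_K^*) is not ℓ-divisible, where O_K^* is the unit group of the ring of integers and tors denotes the torsion subgroup. -/
/-!
Write `U_n = 1 + 𝔪ⁿ` (`unitsCongrOne (𝔪 ^ n)`). By Hensel's lemma every unit is a root of unity
times an element of `U_1`, and for `ℓ ≠ p` every element of `U_1` is an `ℓ`-th power; hence
`Oˣ/tors` is `ℓ`-divisible.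

For `ℓ = p`: the `p^k`-th powers of elements of `U_1` lie in `U_{k+1}`. A unit `ζ ≠ 1` of `U_1`
of prime order `ℓ` satisfies `∑ ζⁱ = 0 ≡ ℓ (mod ζ - 1)`, so `ℓ = p` and `p ∈ (ζ - 1)`. If `p = 0`
in `O` this is impossible since Frobenius is injective; otherwise `p ∉ 𝔪ʲ` for large `j`, so `U_j`
is torsion-free. If `Oˣ/tors` were `p`-divisible, then for every `k` a unit `u ≠ 1` of `U_j`
would be `w^{p^k}` (with `w ∈ U_1`) up to a torsion unit; for `k ≥ j` that torsion unit lies in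
`U_j`, so it is trivial and `u ∈ U_{k+1}`. Hence `u` lies in every `U_n`, forcing `u = 1`.
-/

open IsLocalRing Polynomial Finset

theorem IsOfFinOrder.exists_prime_orderOf_pow {G : Type*} [Monoid G] {t : G}
    (ht : IsOfFinOrder t) (ht1 : t ≠ 1) : ∃ k ℓ : ℕ, ℓ.Prime ∧ orderOf (t ^ k) = ℓ :=
  ⟨orderOf t / (orderOf t).minFac, (orderOf t).minFac,
    Nat.minFac_prime (by rwa [Ne, orderOf_eq_one_iff]),
    orderOf_pow_orderOf_div ht.orderOf_pos.ne' (Nat.minFac_dvd _)⟩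

theorem exists_pow_pow_eq_of_forall_exists_pow_eq {G : Type*} [Monoid G] {n : ℕ}
    (h : ∀ x : G, ∃ y, y ^ n = x) (k : ℕ) (x : G) : ∃ y, y ^ n ^ k = x := by
  induction k generalizing x with
  | zero => exact ⟨x, pow_one x⟩
  | succ k ih =>
    obtain ⟨y, rfl⟩ := ih x
    obtain ⟨z, rfl⟩ := h y
    exact ⟨z, by rw [pow_succ', pow_mul]⟩

section UnitsCongrOne

variable {R : Type*} [CommRing R]

def unitsCongrOne (I : Ideal R) : Subgroup Rˣ :=
  (Units.map (Ideal.Quotient.mk I : R →* R ⧸ I)).ker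

theorem mem_unitsCongrOne {I : Ideal R} {u : Rˣ} : u ∈ unitsCongrOne I ↔ (u : R) - 1 ∈ I := by
  rw [unitsCongrOne, MonoidHom.mem_ker, Units.ext_iff, ← Ideal.Quotient.eq]
  rfl

theorem unitsCongrOne_mono {I J : Ideal R} (h : I ≤ J) : unitsCongrOne I ≤ unitsCongrOne J :=
  fun _ hu => mem_unitsCongrOne.mpr (h (mem_unitsCongrOne.mp hu))

theorem mul_inv_mem_unitsCongrOne_iff {I : Ideal R} {u v : Rˣ} :
    u * v⁻¹ ∈ unitsCongrOne I ↔ (u : R) - v ∈ I := by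
  rw [mem_unitsCongrOne, ← Ideal.mul_unit_mem_iff_mem I (v⁻¹).isUnit (x := (u : R) - v),
    sub_mul, Units.mul_inv, Units.val_mul]

theorem Ideal.Quotient.mk_geom_sum {I : Ideal R} {x : R} (hx : x - 1 ∈ I) (n : ℕ) :
    Ideal.Quotient.mk I (∑ i ∈ range n, x ^ i) = n := by
  have hx' : Ideal.Quotient.mk I x = 1 := by
    rw [← map_one (Ideal.Quotient.mk I)]
    exact Ideal.Quotient.eq.mpr hx
  simp [hx']

theorem pow_mem_unitsCongrOne_mul {I J : Ideal R} (hIJ : I ≤ J) {n : ℕ} (hn : (n : R) ∈ J)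
    {x : Rˣ} (hx : x ∈ unitsCongrOne I) : x ^ n ∈ unitsCongrOne (I * J) := by
  rw [mem_unitsCongrOne] at hx ⊢
  have hsum : ∑ i ∈ range n, (x : R) ^ i ∈ J := by
    rwa [← Ideal.Quotient.eq_zero_iff_mem, Ideal.Quotient.mk_geom_sum (hIJ hx),
      ← map_natCast (Ideal.Quotient.mk J), Ideal.Quotient.eq_zero_iff_mem]
  rw [Units.val_pow_eq_pow_val, ← mul_geom_sum]
  exact Ideal.mul_mem_mul hx hsum

theorem pow_pow_mem_unitsCongrOne_pow {I : Ideal R} {p : ℕ} (hp : (p : R) ∈ I) {x : Rˣ}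
    (hx : x ∈ unitsCongrOne I) (k : ℕ) : x ^ p ^ k ∈ unitsCongrOne (I ^ (k + 1)) := by
  induction k with
  | zero => simpa using hx
  | succ k ih =>
    rw [pow_succ p, pow_mul, pow_succ I]
    exact pow_mem_unitsCongrOne_mul (Ideal.pow_le_self k.succ_ne_zero) hp ih

theorem natCast_mem_of_pow_eq_one [NoZeroDivisors R] {ζ : R} {n : ℕ} (hζ : ζ ^ n = 1)
    (hζ1 : ζ ≠ 1) {I : Ideal R} (hI : ζ - 1 ∈ I) : (n : R) ∈ I := by
  have hsum : ∑ i ∈ range n, ζ ^ i = 0 := by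
    have h := mul_geom_sum ζ n
    rw [hζ, sub_self] at h
    exact (mul_eq_zero.mp h).resolve_left (sub_ne_zero.mpr hζ1)
  rw [← Ideal.Quotient.eq_zero_iff_mem, map_natCast, ← Ideal.Quotient.mk_geom_sum hI, hsum,
    map_zero]

theorem eq_one_of_forall_mem_unitsCongrOne_pow {I : Ideal R} [IsHausdorff I R] {u : Rˣ}
    (h : ∀ n, u ∈ unitsCongrOne (I ^ n)) : u = 1 := by
  refine Units.ext (sub_eq_zero.mp (IsHausdorff.haus ‹_› _ fun n => ?_))
  simpa [SModEq.zero] using mem_unitsCongrOne.mp (h n)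

end UnitsCongrOne

section Hensel

variable {R : Type*} [CommRing R] [Nontrivial R] {I : Ideal R} [HenselianRing R I]

theorem exists_pow_eq_of_pow_sub_mem {n : ℕ} (hn : IsUnit (n : R)) {a₀ w : R}
    (ha₀ : IsUnit a₀) (h : a₀ ^ n - w ∈ I) : ∃ a, a ^ n = w ∧ a - a₀ ∈ I := by
  have hn0 : n ≠ 0 := by
    rintro rfl
    simp at hn
  obtain ⟨a, ha, haa₀⟩ := HenselianRing.is_henselian (X ^ n - C w) (monic_X_pow_sub_C w hn0)
    a₀ (by simpa using h)
    (by simpa [derivative_X_pow] using (hn.mul (ha₀.pow (n - 1))).map (Ideal.Quotient.mk I))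
  exact ⟨a, by simpa [sub_eq_zero] using ha, haa₀⟩

theorem exists_pow_eq_of_mem_unitsCongrOne {n : ℕ} (hn : IsUnit (n : R)) {w : Rˣ}
    (hw : w ∈ unitsCongrOne I) : ∃ y : Rˣ, y ^ n = w := by
  have hn0 : n ≠ 0 := by
    rintro rfl
    simp at hn
  obtain ⟨a, ha, -⟩ := exists_pow_eq_of_pow_sub_mem hn isUnit_one
    (by rw [one_pow, ← neg_sub]; exact neg_mem (mem_unitsCongrOne.mp hw))
  have haU : IsUnit a := (isUnit_pow_iff hn0).mp (ha ▸ w.isUnit)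
  exact ⟨haU.unit, Units.ext (by simpa using ha)⟩

end Hensel

section LocalRing

variable {R : Type*} [CommRing R] [IsLocalRing R]

theorem natCast_mem_maximalIdeal_iff (p : ℕ) [CharP (ResidueField R) p] {n : ℕ} :
    (n : R) ∈ maximalIdeal R ↔ p ∣ n := by
  rw [← residue_eq_zero_iff, map_natCast, CharP.cast_eq_zero_iff (ResidueField R) p]

theorem isUnit_natCast_iff_not_dvd (p : ℕ) [CharP (ResidueField R) p] {n : ℕ} :
    IsUnit (n : R) ↔ ¬ p ∣ n := by
  rw [← natCast_mem_maximalIdeal_iff (R := R) p, mem_maximalIdeal, mem_nonunits_iff, not_not]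

theorem exists_mem_unitsCongrOne_pow_ne_one [NoZeroDivisors R] (hm : maximalIdeal R ≠ ⊥)
    (j : ℕ) : ∃ u ∈ unitsCongrOne (maximalIdeal R ^ j), u ≠ 1 := by
  obtain ⟨π, hπ, hπ0⟩ := Submodule.exists_mem_ne_zero_of_ne_bot hm
  have hu := isUnit_one_sub_self_of_mem_nonunits _
    (Ideal.pow_mem_of_mem (maximalIdeal R) hπ (j + 1) j.succ_pos)
  refine ⟨hu.unit, mem_unitsCongrOne.mpr ?_, fun h => hπ0 ((pow_eq_zero_iff j.succ_ne_zero).mp ?_)⟩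
  · rw [IsUnit.unit_spec, sub_sub_cancel_left, pow_succ]
    exact neg_mem (Ideal.mul_mem_right _ _ (Ideal.pow_mem_pow hπ j))
  · simpa using congrArg Units.val h

theorem natCast_ne_zero_and_mem_of_pow_prime_eq_one [IsDomain R] {p : ℕ} (hp : p.Prime)
    [CharP (ResidueField R) p] {ℓ : ℕ} (hℓ : ℓ.Prime) {ζ : Rˣ} (hζ : ζ ^ ℓ = 1) (hζ1 : ζ ≠ 1)
    {I : Ideal R} (hIm : I ≤ maximalIdeal R) (hζI : ζ ∈ unitsCongrOne I) :
    (p : R) ≠ 0 ∧ (p : R) ∈ I := by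
  have hζ' : (ζ : R) ^ ℓ = 1 := by simpa using congrArg Units.val hζ
  have hζ1' : (ζ : R) ≠ 1 := fun h => hζ1 (Units.ext h)
  have hℓI := natCast_mem_of_pow_eq_one hζ' hζ1' (mem_unitsCongrOne.mp hζI)
  obtain rfl : ℓ = p :=
    ((Nat.prime_dvd_prime_iff_eq hp hℓ).mp ((natCast_mem_maximalIdeal_iff p).mp (hIm hℓI))).symm
  refine ⟨fun h0 => hζ1' ?_, hℓI⟩
  have : Fact ℓ.Prime := ⟨hℓ⟩
  have : CharP R ℓ := (CharP.charP_iff_prime_eq_zero hℓ).mpr h0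
  exact frobenius_inj R ℓ (by simpa [frobenius_def] using hζ')

theorem exists_forall_mem_unitsCongrOne_pow_isOfFinOrder_eq_one [IsDomain R]
    [IsHausdorff (maximalIdeal R) R] {p : ℕ} (hp : p.Prime) [CharP (ResidueField R) p] :
    ∃ j, ∀ t ∈ unitsCongrOne (maximalIdeal R ^ j), IsOfFinOrder t → t = 1 := by
  -- Krull intersection, in a form that also covers `p = 0` in `R`.
  obtain ⟨j, hj⟩ : ∃ j, (p : R) ∈ maximalIdeal R ^ (j + 1) → (p : R) = 0 := by
    by_contra! h
    refine (h 0).2 (IsHausdorff.haus ‹_› _ fun n => ?_)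
    simpa [SModEq.zero] using Ideal.pow_le_pow_right n.le_succ (h n).1
  refine ⟨j + 1, fun t ht htors => ?_⟩
  by_contra ht1
  obtain ⟨k, ℓ, hℓ, hord⟩ := htors.exists_prime_orderOf_pow ht1
  obtain ⟨hp0, hpI⟩ := natCast_ne_zero_and_mem_of_pow_prime_eq_one hp hℓ
    (hord ▸ pow_orderOf_eq_one (t ^ k)) (by rw [Ne, ← orderOf_eq_one_iff, hord]; exact hℓ.ne_one)
    (Ideal.pow_le_self j.succ_ne_zero) (Subgroup.pow_mem _ ht k)
  exact hp0 (hj hpI)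

variable [HenselianRing R (maximalIdeal R)] [Finite (ResidueField R)]

theorem exists_isOfFinOrder_mul_inv_mem_unitsCongrOne (u : Rˣ) :
    ∃ s : Rˣ, IsOfFinOrder s ∧ u * s⁻¹ ∈ unitsCongrOne (maximalIdeal R) := by
  have := Fintype.ofFinite (ResidueField R)
  set q := Fintype.card (ResidueField R)
  have hq : 1 < q := Fintype.one_lt_card
  have hq1 : IsUnit ((q - 1 : ℕ) : R) := by
    rw [← isUnit_map_iff (residue R), map_natCast, Nat.cast_pred (by omega),
      FiniteField.cast_card_eq_zero, zero_sub]
    exact isUnit_one.neg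
  have hu : (u : R) ^ (q - 1) - 1 ∈ maximalIdeal R := by
    rw [← residue_eq_zero_iff, map_sub, map_pow, map_one, FiniteField.pow_card_sub_one_eq_one _
      ((residue_ne_zero_iff_isUnit _).mpr u.isUnit), sub_self]
  obtain ⟨a, ha, hau⟩ := exists_pow_eq_of_pow_sub_mem hq1 u.isUnit hu
  have haU : IsUnit a := IsUnit.of_pow_eq_one ha (by omega)
  refine ⟨haU.unit, isOfFinOrder_iff_pow_eq_one.mpr ⟨q - 1, by omega, Units.ext (by simpa)⟩, ?_⟩
  rw [mul_inv_mem_unitsCongrOne_iff, IsUnit.unit_spec, ← neg_sub]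
  exact neg_mem hau

theorem exists_mem_unitsCongrOne_mk_eq (x : Rˣ ⧸ CommGroup.torsion Rˣ) :
    ∃ w ∈ unitsCongrOne (maximalIdeal R), (w : Rˣ ⧸ CommGroup.torsion Rˣ) = x := by
  obtain ⟨u, rfl⟩ := QuotientGroup.mk_surjective x
  obtain ⟨s, hs, hus⟩ := exists_isOfFinOrder_mul_inv_mem_unitsCongrOne u
  refine ⟨u * s⁻¹, hus, ?_⟩
  rw [QuotientGroup.mk_mul, QuotientGroup.mk_inv, (QuotientGroup.eq_one_iff s).mpr hs, inv_one,
    mul_one]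

theorem forall_exists_pow_eq_of_isUnit_natCast {n : ℕ} (hn : IsUnit (n : R))
    (x : Rˣ ⧸ CommGroup.torsion Rˣ) : ∃ y, y ^ n = x := by
  obtain ⟨w, hw, rfl⟩ := exists_mem_unitsCongrOne_mk_eq x
  obtain ⟨y, rfl⟩ := exists_pow_eq_of_mem_unitsCongrOne hn hw
  exact ⟨y, rfl⟩

theorem not_forall_exists_pow_residueChar_eq [IsDomain R] [IsHausdorff (maximalIdeal R) R]
    (hm : maximalIdeal R ≠ ⊥) {p : ℕ} (hp : p.Prime) [CharP (ResidueField R) p] :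
    ¬ ∀ x : Rˣ ⧸ CommGroup.torsion Rˣ, ∃ y, y ^ p = x := by
  intro hdiv
  obtain ⟨j, hj⟩ := exists_forall_mem_unitsCongrOne_pow_isOfFinOrder_eq_one (R := R) hp
  obtain ⟨u, hu, hu1⟩ := exists_mem_unitsCongrOne_pow_ne_one hm j
  refine hu1 (eq_one_of_forall_mem_unitsCongrOne_pow (I := maximalIdeal R) fun n => ?_)
  obtain ⟨y, hy⟩ := exists_pow_pow_eq_of_forall_exists_pow_eq hdiv (max n j) u
  obtain ⟨w, hw, rfl⟩ := exists_mem_unitsCongrOne_mk_eq y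
  have hpm : (p : R) ∈ maximalIdeal R := (natCast_mem_maximalIdeal_iff p).mpr dvd_rfl
  have hwk := pow_pow_mem_unitsCongrOne_pow hpm hw (max n j)
  have hwu : u = w ^ p ^ max n j := by
    refine inv_mul_eq_one.mp (hj _ (mul_mem (inv_mem hu) ?_) ?_)
    · exact unitsCongrOne_mono (Ideal.pow_le_pow_right (by omega)) hwk
    · exact (QuotientGroup.eq (s := CommGroup.torsion Rˣ)).mp (by rw [QuotientGroup.mk_pow, hy])
  rw [hwu]
  exact unitsCongrOne_mono (Ideal.pow_le_pow_right (by omega)) hwk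

end LocalRing

theorem stmt5_general (O : Type*) [CommRing O] [IsDomain O] [IsDiscreteValuationRing O]
    [IsAdicComplete (IsLocalRing.maximalIdeal O) O]
    [Finite (IsLocalRing.ResidueField O)]
    (p f : ℕ) (hp : p.Prime)
    (hq : Nat.card (IsLocalRing.ResidueField O) = p ^ f) :
    ∀ ℓ : ℕ, ℓ.Prime →
      ((¬ ∀ x : Oˣ ⧸ CommGroup.torsion Oˣ, ∃ y, y ^ ℓ = x) ↔ ℓ = p) := by
  intro ℓ hℓ
  have : Fact p.Prime := ⟨hp⟩
  have := Fintype.ofFinite (ResidueField O)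
  have : CharP (ResidueField O) p :=
    charP_of_card_eq_prime_pow (by rwa [← Nat.card_eq_fintype_card])
  constructor
  · contrapose!
    intro hℓp
    refine forall_exists_pow_eq_of_isUnit_natCast ((isUnit_natCast_iff_not_dvd p).mpr ?_)
    exact fun h => hℓp ((Nat.prime_dvd_prime_iff_eq hp hℓ).mp h).symm
  · rintro rfl
    exact not_forall_exists_pow_residueChar_eq (IsDiscreteValuationRing.not_a_field O) hℓ

/-- Let `O` be the valuation ring of a nonarchimedean local field
(a complete discrete valuation ring with finite residue field) whose residue field has
cardinality `q = p ^ f`.  Then `p` is the unique prime `ℓ` such that the quotient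
`Oˣ / tors(Oˣ)` is not `ℓ`-divisible. -/
theorem stmt5 (O : Type*) [CommRing O] [IsDomain O] [IsDiscreteValuationRing O]
    [IsAdicComplete (IsLocalRing.maximalIdeal O) O]
    [Finite (IsLocalRing.ResidueField O)]
    (p f : ℕ) (hp : p.Prime) (hf : 1 ≤ f)
    (hq : Nat.card (IsLocalRing.ResidueField O) = p ^ f) :
    ∀ ℓ : ℕ, ℓ.Prime →
      ((¬ ∀ x : Oˣ ⧸ CommGroup.torsion Oˣ, ∃ y, y ^ ℓ = x) ↔ ℓ = p) :=
  stmt5_general O p f hp hq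
end

section
/- Let k ≥ 3, C = ⟨ζ⟩ ⊂ ℂ^× the group of k-th roots of unity, G a finite group acting transitively on {1,...,n} with H the stabilizer of 1, and W = C^n ⋊ G the wreath product. Let χ : C^n ⋊ H → ℂ^× be the character (a_1,...,a_n,h) ↦ a_1, and ρ = Ind_{C^n⋊H}^W(χ). Then the n character eigenspaces of the restriction of ρ to C^n form the unique monomial structure on ρ. -/
/-!
The induced representation has a basis `F_i`, `i ∈ X`, of functions each supported on a single
coset of `C^n ⋊ H`. The group `W` permutes the lines `ℂ F_i` up to scalars, and the torus `C^n`
acts on `F_i` through the character `a ↦ a_i`. These characters are pairwise distinct, so the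
`C^n`-eigenlines are exactly the lines `ℂ F_i`, and these lines form a monomial structure.
Conversely, let `ℂ v` be a line of some monomial structure with two nonzero coordinates `i ≠ j`.
Scaling the `j`-th coordinate by `ζ` and by `ζ²` gives two further lines of the structure, and
`v` lies in their sum because `1, ζ, ζ²` are distinct (this is where `k ≥ 3` enters). That
contradicts independence.
-/

open Module Submodule

def IsMonomialStructure {F W V : Type*} [Field F] [Monoid W] [AddCommGroup V] [Module F V]
    (ρ : Representation F W V) (M : Set (Submodule F V)) [DecidableEq M] : Prop :=
  (∀ L ∈ M, finrank F L = 1) ∧ (∀ w, ∀ L ∈ M, L.map (ρ w) ∈ M) ∧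
    DirectSum.IsInternal (fun L : M => (L : Submodule F V))

section DiagonalTorus

variable {F V ι : Type*} [Field F] [AddCommGroup V] [Module F V]

theorem exists_ne_zero_eq_span_singleton {L : Submodule F V} (h : finrank F L = 1) :
    ∃ v ≠ 0, L = F ∙ v := by
  set l := Projectivization.mk'' L h
  refine ⟨l.rep, l.rep_nonzero, ?_⟩
  rw [← Projectivization.submodule_mk'' L h, ← Projectivization.submodule_mk _ l.rep_nonzero,
    l.mk_rep]

variable (b : Basis ι F V)

theorem Module.Basis.exists_two_repr_ne_zero_of_span_ne {v : V} (hv : v ≠ 0)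
    (h : ∀ i, F ∙ v ≠ F ∙ b i) :
    ∃ i j, i ≠ j ∧ b.repr v i ≠ 0 ∧ b.repr v j ≠ 0 := by
  obtain ⟨i, hi⟩ : ∃ i, b.repr v i ≠ 0 := by
    by_contra! h0
    exact hv (b.ext_elem fun m => by simpa using h0 m)
  by_contra! hsingle
  refine h i ?_
  have hv : v = b.repr v i • b i := b.ext_elem fun m => by
    by_cases hm : m = i
    · subst hm; simp
    · simp [Ne.symm hm, hsingle i m (Ne.symm hm) hi]
  rw [hv, span_singleton_smul_eq (isUnit_iff_ne_zero.mpr hi)]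

theorem Module.Basis.isInternal_range_span [DecidableEq (Set.range fun i => F ∙ b i)] :
    DirectSum.IsInternal (fun L : Set.range (fun i => F ∙ b i) => (L : Submodule F V)) := by
  rw [DirectSum.isInternal_submodule_iff_iSupIndep_and_iSup_eq_top, ← sSupIndep_iff,
    ← sSup_eq_iSup', sSup_range, ← span_range_eq_iSup, b.span_eq]
  exact ⟨b.linearIndependent.iSupIndep_span_singleton.sSupIndep_range, rfl⟩

variable {b} {C : Subgroup Fˣ} {D : (ι → C) → V →ₗ[F] V}

theorem repr_apply_of_diagonal (hD : ∀ a i, D a (b i) = ((a i : Fˣ) : F) • b i) (a : ι → C)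
    (v : V) (m : ι) : b.repr (D a v) m = (a m : Fˣ) * b.repr v m := by
  have : (b.coord m).comp (D a) = ((a m : Fˣ) : F) • b.coord m := b.ext fun i => by
    by_cases hm : i = m
    · subst hm; simp [hD]
    · simp [hD, hm]
  exact LinearMap.congr_fun this v

theorem map_span_basis_of_diagonal (hD : ∀ a i, D a (b i) = ((a i : Fˣ) : F) • b i)
    (a : ι → C) (i : ι) : (F ∙ b i).map (D a) = F ∙ b i := by
  rw [map_span, Set.image_singleton, hD, span_singleton_smul_eq (Units.isUnit _)]

theorem map_span_ne_of_repr_ne_zero [DecidableEq ι]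
    (hD : ∀ a i, D a (b i) = ((a i : Fˣ) : F) • b i)
    {v : V} {i j : ι} (hij : i ≠ j) (hi : b.repr v i ≠ 0) (hj : b.repr v j ≠ 0)
    {μ : C} (hμ : μ ≠ 1) : (F ∙ v).map (D (Pi.mulSingle j μ)) ≠ F ∙ v := by
  intro h
  obtain ⟨c, hc⟩ := mem_span_singleton.mp
    (h ▸ mem_map_of_mem (f := D (Pi.mulSingle j μ)) (mem_span_singleton_self v))
  have hci := congrArg (b.repr · i) hc
  have hcj := congrArg (b.repr · j) hc
  simp only [map_smul, Finsupp.smul_apply, repr_apply_of_diagonal hD, Pi.mulSingle_eq_same,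
    Pi.mulSingle_eq_of_ne hij, smul_eq_mul] at hci hcj
  have hc1 : c = 1 := by simpa [hi] using hci
  subst hc1
  exact hμ (Subtype.ext (Units.ext (by simpa [hj] using hcj.symm)))

theorem setOf_invariant_lines_eq_range_span (hD : ∀ a i, D a (b i) = ((a i : Fˣ) : F) • b i)
    {ζ : C} (hζ : ζ ≠ 1) :
    {L : Submodule F V | finrank F L = 1 ∧ ∀ a, L.map (D a) = L} = Set.range fun i => F ∙ b i := by
  classical
  ext L
  constructor
  · rintro ⟨hL, hinv⟩
    obtain ⟨v, hv, rfl⟩ := exists_ne_zero_eq_span_singleton hL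
    by_contra! h
    obtain ⟨i, j, hij, hi, hj⟩ := b.exists_two_repr_ne_zero_of_span_ne hv fun i hi => h ⟨i, hi.symm⟩
    exact map_span_ne_of_repr_ne_zero hD hij hi hj hζ (hinv _)
  · rintro ⟨i, rfl⟩
    exact ⟨finrank_span_singleton (b.ne_zero i), fun a => map_span_basis_of_diagonal hD a i⟩

theorem exists_eq_span_basis_of_sSupIndep (hD : ∀ a i, D a (b i) = ((a i : Fˣ) : F) • b i)
    {ζ : C} (hζ : ζ ^ 2 ≠ 1) {M : Set (Submodule F V)} (hline : ∀ L ∈ M, finrank F L = 1)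
    (hstable : ∀ a, ∀ L ∈ M, L.map (D a) ∈ M) (hind : sSupIndep M) {L : Submodule F V}
    (hL : L ∈ M) : ∃ i, L = F ∙ b i := by
  classical
  obtain ⟨v, hv, rfl⟩ := exists_ne_zero_eq_span_singleton (hline L hL)
  by_contra! h
  obtain ⟨i, j, hij, hi, hj⟩ := b.exists_two_repr_ne_zero_of_span_ne hv h
  have hζ1 : ζ ≠ 1 := fun h1 => hζ (by rw [h1, one_pow])
  set L₁ := (F ∙ v).map (D (Pi.mulSingle j ζ))
  set L₂ := (F ∙ v).map (D (Pi.mulSingle j (ζ ^ 2)))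
  have hdisj : Disjoint (F ∙ v) (L₁ ⊔ L₂) := by
    rw [← sSup_pair]
    refine hind.disjoint_sSup hL (Set.pair_subset (hstable _ _ hL) (hstable _ _ hL)) ?_
    rintro (h₁ | h₂)
    · exact map_span_ne_of_repr_ne_zero hD hij hi hj hζ1 h₁.symm
    · exact map_span_ne_of_repr_ne_zero hD hij hi hj hζ h₂.symm
  set μ : F := ((ζ⁻¹ : C) : Fˣ).val
  -- on the `j`-th coordinate this reads `(1 + ζ⁻¹) ζ - ζ⁻¹ ζ² = 1`
  have hcomb : v = (1 + μ) • D (Pi.mulSingle j ζ) v - μ • D (Pi.mulSingle j (ζ ^ 2)) v := by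
    refine b.ext_elem fun m => ?_
    simp only [map_sub, map_smul, Finsupp.sub_apply, Finsupp.smul_apply, smul_eq_mul,
      repr_apply_of_diagonal hD]
    by_cases hm : m = j
    · subst hm
      have hμ : μ * ((ζ : Fˣ) : F) = 1 := by simp [μ]
      simp only [Pi.mulSingle_eq_same, SubmonoidClass.coe_pow, Units.val_pow_eq_pow_val]
      linear_combination (-(b.repr v m)) * (1 - ((ζ : Fˣ) : F)) * hμ
    · simp only [Pi.mulSingle_eq_of_ne hm, OneMemClass.coe_one, Units.val_one]
      ring
  have hvsup : v ∈ L₁ ⊔ L₂ := by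
    rw [hcomb]
    exact sub_mem
      (smul_mem _ _ (mem_sup_left (mem_map_of_mem (mem_span_singleton_self v))))
      (smul_mem _ _ (mem_sup_right (mem_map_of_mem (mem_span_singleton_self v))))
  exact hv (disjoint_def.mp hdisj v (mem_span_singleton_self v) hvsup)

theorem span_basis_mem_of_sSup_eq_top {M : Set (Submodule F V)} (hM : ∀ L ∈ M, ∃ i, L = F ∙ b i)
    (htop : sSup M = ⊤) (i : ι) : F ∙ b i ∈ M := by
  by_contra hi
  have hle : sSup M ≤ LinearMap.ker (b.coord i) := sSup_le fun L hL => by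
    obtain ⟨j, rfl⟩ := hM L hL
    have hji : j ≠ i := fun h => hi (h ▸ hL)
    simp [span_singleton_le_iff_mem, hji]
  have := hle (htop ▸ mem_top : b i ∈ sSup M)
  simp at this

theorem isMonomialStructure_iff_eq_range_span {W : Type*} [Monoid W] {ρ : Representation F W V}
    {t : (ι → C) → W} (ht : ∀ a i, ρ (t a) (b i) = ((a i : Fˣ) : F) • b i)
    (hmono : ∀ w i, ∃ j, ∃ u : Fˣ, ρ w (b i) = u • b j) {ζ : C} (hζ : ζ ^ 2 ≠ 1)
    (M : Set (Submodule F V)) [DecidableEq M] :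
    IsMonomialStructure ρ M ↔ M = Set.range fun i => F ∙ b i := by
  constructor
  · rintro ⟨hline, hstable, hint⟩
    have hM : ∀ L ∈ M, ∃ i, L = F ∙ b i := fun L hL =>
      exists_eq_span_basis_of_sSupIndep ht hζ hline (fun a => hstable (t a))
        ((sSupIndep_iff M).mpr hint.submodule_iSupIndep) hL
    have htop : sSup M = ⊤ := by rw [sSup_eq_iSup', hint.submodule_iSup_eq_top]
    refine Set.Subset.antisymm (fun L hL => ?_) ?_
    · obtain ⟨i, rfl⟩ := hM L hL
      exact ⟨i, rfl⟩
    · rintro _ ⟨i, rfl⟩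
      exact span_basis_mem_of_sSup_eq_top hM htop i
  · rintro rfl
    refine ⟨?_, ?_, b.isInternal_range_span⟩
    · rintro _ ⟨i, rfl⟩
      exact finrank_span_singleton (b.ne_zero i)
    · rintro w _ ⟨i, rfl⟩
      obtain ⟨j, u, hu⟩ := hmono w i
      refine ⟨j, ?_⟩
      rw [map_span, Set.image_singleton, hu, span_singleton_group_smul_eq]

end DiagonalTorus

section InducedRepresentation

open SemidirectProduct

variable {X G : Type*} [Group G] [MulAction G X] {C : Subgroup ℂˣ} {φ : G →* MulAut (X → C)}
  (K : Subgroup ((X → C) ⋊[φ] G)) (χ : K →* ℂˣ)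

def inducedSpace : Submodule ℂ ((X → C) ⋊[φ] G → ℂ) where
  carrier := {f | ∀ (u : K) w, f (u * w) = χ u * f w}
  add_mem' hf hg u w := by simp [hf u w, hg u w, mul_add]
  zero_mem' u w := by simp
  smul_mem' c f hf u w := by simp [hf u w, mul_left_comm]

def inducedRep : Representation ℂ ((X → C) ⋊[φ] G) (inducedSpace K χ) where
  toFun w := (LinearMap.funLeft ℂ ℂ (· * w)).restrict fun f hf u x => by
    simp [LinearMap.funLeft, mul_assoc, hf u (x * w)]
  map_one' := by ext; simp [LinearMap.funLeft]
  map_mul' w₁ w₂ := by ext; simp [LinearMap.funLeft, mul_assoc]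

variable {K χ} {p : X}

theorem apply_eq_of_mem_inducedSpace (hK : K = (MulAction.stabilizer G p).comap rightHom)
    (hχ : ∀ u : K, χ u = (u : (X → C) ⋊[φ] G).left p) {f : (X → C) ⋊[φ] G → ℂ}
    (hf : f ∈ inducedSpace K χ) (x : (X → C) ⋊[φ] G) {g : G} (hg : g • p = x.right⁻¹ • p) :
    f x = (x.left p : ℂˣ) * f (inr g⁻¹) := by
  have hu : inl x.left * inr (x.right * g) ∈ K := by
    simp [hK, mul_smul, hg]
  have hx : ((⟨_, hu⟩ : K) : (X → C) ⋊[φ] G) * inr g⁻¹ = x := by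
    rw [mul_assoc, ← map_mul, mul_inv_cancel_right, inl_left_mul_inr_right]
  rw [← hx, hf, hχ]
  simp

variable (p) in
open Classical in
/-- The vector of the induced representation supported on the coset of `K` corresponding to `i`,
normalised to `1` at `(inr g)⁻¹` for `g • p = i`. -/
noncomputable def monomialFun (i : X) : (X → C) ⋊[φ] G → ℂ :=
  fun x => if x.right⁻¹ • p = i then ((x.left p : ℂˣ) : ℂ) else 0

theorem monomialFun_mul (hφ : ∀ g a i, φ g a i = a (g⁻¹ • i)) (i : X)
    (x w : (X → C) ⋊[φ] G) :
    monomialFun p i (x * w) = (w.left (w.right • i) : ℂˣ) * monomialFun p (w.right • i) x := by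
  have hcond : (x * w).right⁻¹ • p = i ↔ x.right⁻¹ • p = w.right • i := by
    rw [mul_right, mul_inv_rev, mul_smul, inv_smul_eq_iff]
  unfold monomialFun
  by_cases h : x.right⁻¹ • p = w.right • i
  · rw [if_pos (hcond.mpr h), if_pos h, mul_left, Pi.mul_apply, hφ, h]
    simp [mul_comm]
  · rw [if_neg (mt hcond.mp h), if_neg h, mul_zero]

open Classical in
theorem monomialFun_inr_inv (g : G) (i : X) :
    monomialFun (φ := φ) p i (inr g)⁻¹ = if g • p = i then 1 else 0 := by
  simp [monomialFun]

theorem monomialFun_mem (hφ : ∀ g a i, φ g a i = a (g⁻¹ • i))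
    (hK : K = (MulAction.stabilizer G p).comap rightHom)
    (hχ : ∀ u : K, χ u = (u : (X → C) ⋊[φ] G).left p) (i : X) :
    monomialFun p i ∈ inducedSpace K χ := by
  intro u w
  have hu : (u : (X → C) ⋊[φ] G).right⁻¹ • p = p := by
    subst hK
    rw [inv_smul_eq_iff]
    exact (MulAction.mem_stabilizer_iff.mp (Subgroup.mem_comap.mp u.2)).symm
  have hiff : w.right⁻¹ • p = i ↔ p = w.right • i := inv_smul_eq_iff
  rw [monomialFun_mul hφ, hχ]
  simp only [monomialFun, hu]
  by_cases h : p = w.right • i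
  · rw [if_pos (hu.trans h), if_pos (hiff.mpr h), ← h]
    ring
  · rw [if_neg (by rwa [hu]), if_neg (mt hiff.mp h), mul_zero, mul_zero]

theorem exists_basis_inducedSpace [Finite X] [MulAction.IsPretransitive G X]
    (hφ : ∀ g a i, φ g a i = a (g⁻¹ • i)) (hK : K = (MulAction.stabilizer G p).comap rightHom)
    (hχ : ∀ u : K, χ u = (u : (X → C) ⋊[φ] G).left p) :
    ∃ b : Basis X ℂ (inducedSpace K χ), ∀ w i,
      inducedRep K χ w (b i) = ((w.left (w.right • i) : ℂˣ) : ℂ) • b (w.right • i) := by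
  classical
  cases nonempty_fintype X
  choose σ hσ using MulAction.exists_smul_eq G p
  let F : X → inducedSpace K χ := fun i => ⟨monomialFun p i, monomialFun_mem hφ hK hχ i⟩
  let e : inducedSpace K χ →ₗ[ℂ] X → ℂ :=
    LinearMap.pi fun i => (LinearMap.proj (inr (σ i)⁻¹)).comp (inducedSpace K χ).subtype
  have heF : ∀ i, e (F i) = Pi.single i 1 := by
    intro i
    ext j
    simp [e, F, monomialFun_inr_inv, hσ, Pi.single_apply, eq_comm]
  have hinj : Function.Injective e := by
    intro f g hfg
    refine Subtype.ext (funext fun x => ?_)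
    rw [apply_eq_of_mem_inducedSpace hK hχ f.2 x (hσ _),
      apply_eq_of_mem_inducedSpace hK hχ g.2 x (hσ _)]
    exact congrArg _ (congrFun hfg _)
  have hsurj : Function.Surjective e := fun c =>
    ⟨∑ i, c i • F i, by simp [heF, ← pi_eq_sum_univ']⟩
  let b := Basis.ofEquivFun (LinearEquiv.ofBijective e ⟨hinj, hsurj⟩)
  have hb : ∀ i, b i = F i := fun i => by
    rw [Basis.coe_ofEquivFun, LinearEquiv.symm_apply_eq]
    exact (heF i).symm
  refine ⟨b, fun w i => ?_⟩
  rw [hb, hb]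
  exact Subtype.ext (funext fun x => monomialFun_mul hφ i x w)

end InducedRepresentation

theorem exists_sq_ne_one_of_mem_iff_pow_eq_one {k : ℕ} (hk : 3 ≤ k) {C : Subgroup ℂˣ}
    (hC : ∀ z : ℂˣ, z ∈ C ↔ z ^ k = 1) : ∃ ζ : C, ζ ^ 2 ≠ 1 := by
  have hprim := (Complex.isPrimitiveRoot_exp k (by omega)).isUnit_unit (by omega)
  refine ⟨⟨_, (hC _).mpr hprim.pow_eq_one⟩, fun h => ?_⟩
  exact hprim.pow_ne_one_of_pos_of_lt two_ne_zero (by omega) (congrArg Subtype.val h)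

open SemidirectProduct in
theorem stmt10_general (k n : ℕ) (hk : 3 ≤ k) (hn : 0 < n)
    (G : Type*) [Group G] [MulAction G (Fin n)]
    [MulAction.IsPretransitive G (Fin n)]
    (C : Subgroup ℂˣ) (hC : ∀ z : ℂˣ, z ∈ C ↔ z ^ k = 1)
    (φ : G →* MulAut (Fin n → C))
    (hφ : ∀ (g : G) (a : Fin n → C) (i : Fin n), φ g a i = a (g⁻¹ • i))
    (H : Subgroup G) (hH : H = MulAction.stabilizer G (⟨0, hn⟩ : Fin n))
    (K : Subgroup ((Fin n → C) ⋊[φ] G))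
    (hK : K = Subgroup.comap SemidirectProduct.rightHom H)
    (χ : K →* ℂˣ)
    (hχ : ∀ w : K, χ w = ((w : (Fin n → C) ⋊[φ] G).left ⟨0, hn⟩ : ℂˣ)) :
    ∃ (V : Submodule ℂ (((Fin n → C) ⋊[φ] G) → ℂ))
      (ρ : Representation ℂ ((Fin n → C) ⋊[φ] G) V),
      (∀ f, f ∈ V ↔ ∀ (u : K) (w : (Fin n → C) ⋊[φ] G),
        f (↑u * w) = (χ u : ℂ) * f w) ∧
      (∀ (w : (Fin n → C) ⋊[φ] G) (f : V) (x : (Fin n → C) ⋊[φ] G),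
        ((ρ w f : _ → ℂ) x) = (f : _ → ℂ) (x * w)) ∧
      (∀ M : Set (Submodule ℂ V), ∀ _ : DecidableEq ↥M,
        ((∀ L ∈ M, Module.finrank ℂ L = 1) ∧
         (∀ (w : (Fin n → C) ⋊[φ] G), ∀ L ∈ M, Submodule.map (ρ w) L ∈ M) ∧
         DirectSum.IsInternal (fun L : M => (L : Submodule ℂ V)))
        ↔ M = {L : Submodule ℂ V | Module.finrank ℂ L = 1 ∧
            ∀ a : Fin n → C, Submodule.map (ρ (SemidirectProduct.inl a)) L = L}) := by
  subst hH
  obtain ⟨b, hb⟩ := exists_basis_inducedSpace hφ hK hχ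
  have htorus : ∀ a i, inducedRep K χ (inl a) (b i) = ((a i : ℂˣ) : ℂ) • b i := fun a i => by
    simpa using hb (inl a) i
  obtain ⟨ζ, hζ⟩ := exists_sq_ne_one_of_mem_iff_pow_eq_one hk hC
  refine ⟨inducedSpace K χ, inducedRep K χ, fun _ => Iff.rfl, fun _ _ _ => rfl, fun M _ => ?_⟩
  rw [setOf_invariant_lines_eq_range_span htorus (ζ := ζ) (fun h => hζ (by rw [h, one_pow]))]
  exact isMonomialStructure_iff_eq_range_span htorus (fun w i => ⟨_, _, hb w i⟩) hζ M

/-- Let `k ≥ 3`, `C ⊂ ℂ^×` the group of `k`-th roots of unity, `G` a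
finite group acting transitively on `{1,…,n}` with `H` the stabilizer of the first point,
and `W = C^n ⋊ G` the wreath product.  Let `χ : C^n ⋊ H → ℂ^×` be the character
`(a₁,…,aₙ,h) ↦ a₁` and `ρ = Ind_{C^n ⋊ H}^W χ`, realized on the space `V` of functions
`f : W → ℂ` with `f (u * w) = χ u * f w`, with `W` acting by right translation.
Then the `1`-dimensional `C^n`-invariant subspaces (the character eigenspaces of `C^n`)
form the unique monomial structure on `ρ`: a set `M` of submodules of `V` is a monomial
structure (lines, `W`-stable, direct sum everything) iff it equals that set. -/
theorem stmt10 (k n : ℕ) (hk : 3 ≤ k) (hn : 0 < n)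
    (G : Type*) [Group G] [Finite G] [MulAction G (Fin n)]
    [MulAction.IsPretransitive G (Fin n)]
    (C : Subgroup ℂˣ) (hC : ∀ z : ℂˣ, z ∈ C ↔ z ^ k = 1)
    (φ : G →* MulAut (Fin n → C))
    (hφ : ∀ (g : G) (a : Fin n → C) (i : Fin n), φ g a i = a (g⁻¹ • i))
    (H : Subgroup G) (hH : H = MulAction.stabilizer G (⟨0, hn⟩ : Fin n))
    (K : Subgroup ((Fin n → C) ⋊[φ] G))
    (hK : K = Subgroup.comap SemidirectProduct.rightHom H)
    (χ : K →* ℂˣ)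
    (hχ : ∀ w : K, χ w = ((w : (Fin n → C) ⋊[φ] G).left ⟨0, hn⟩ : ℂˣ)) :
    ∃ (V : Submodule ℂ (((Fin n → C) ⋊[φ] G) → ℂ))
      (ρ : Representation ℂ ((Fin n → C) ⋊[φ] G) V),
      (∀ f, f ∈ V ↔ ∀ (u : K) (w : (Fin n → C) ⋊[φ] G),
        f (↑u * w) = (χ u : ℂ) * f w) ∧
      (∀ (w : (Fin n → C) ⋊[φ] G) (f : V) (x : (Fin n → C) ⋊[φ] G),
        ((ρ w f : _ → ℂ) x) = (f : _ → ℂ) (x * w)) ∧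
      (∀ M : Set (Submodule ℂ V), ∀ _ : DecidableEq ↥M,
        ((∀ L ∈ M, Module.finrank ℂ L = 1) ∧
         (∀ (w : (Fin n → C) ⋊[φ] G), ∀ L ∈ M, Submodule.map (ρ w) L ∈ M) ∧
         DirectSum.IsInternal (fun L : M => (L : Submodule ℂ V)))
        ↔ M = {L : Submodule ℂ V | Module.finrank ℂ L = 1 ∧
            ∀ a : Fin n → C, Submodule.map (ρ (SemidirectProduct.inl a)) L = L}) :=
  stmt10_general k n hk hn G C hC φ hφ H hH K hK χ hχ
end

section
/- Let k ≥ 3, ζ = exp(2πi/k), and let ρ be an n-dimensional complex representation of a group W containing an element c. Suppose 𝓜 is a set of n one-dimensional subspaces of ℂ^n with ρ = ⊕_{M∈𝓜} M, permuted by the action of c, where c acts on each fixed line by a k-th root of unity, and tr(ρ(c)) = n - 1 + ζ. Then c fixes every line in 𝓜. -/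
open Complex in
private lemma root_re_le (k : ℕ) (hk : 3 ≤ k) {z : ℂ} (hz : z ^ k = 1) (hne : z ≠ 1) :
    z.re ≤ Real.cos (2 * Real.pi / k) := by
  have hk0 : (k : ℕ) ≠ 0 := by omega
  haveI : NeZero k := ⟨hk0⟩
  obtain ⟨j, hj, rfl⟩ := (Complex.isPrimitiveRoot_exp k hk0).eq_pow_of_pow_eq_one hz
  have hj0 : j ≠ 0 := by rintro rfl; simp at hne
  have hkR : (0:ℝ) < k := by positivity
  have key : exp (2 * ↑Real.pi * I / ↑k) ^ j
      = exp ((↑(2 * Real.pi * j / k) : ℝ) * I) := by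
    rw [← Complex.exp_nat_mul]
    congr 1
    push_cast
    field_simp
  rw [key, Complex.exp_ofReal_mul_I_re]
  set s : ℝ := 2 * Real.pi / k with hs
  have hspos : 0 < s := by positivity
  have haeq : 2 * Real.pi * j / k = (j:ℝ) * s := by rw [hs]; ring
  have hj1 : (1:ℝ) ≤ j := by exact_mod_cast Nat.one_le_iff_ne_zero.2 hj0
  have hsle : s ≤ 2 * Real.pi * j / k := by
    rw [haeq]
    exact le_mul_of_one_le_left hspos.le hj1
  have hks : (k:ℝ) * s = 2 * Real.pi := by rw [hs]; field_simp
  have haub : 2 * Real.pi * j / k ≤ 2 * Real.pi - s := by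
    rw [haeq]
    have hjk : ((j:ℝ) + 1) ≤ k := by exact_mod_cast hj
    nlinarith [hspos.le]
  set a : ℝ := 2 * Real.pi * j / k with ha
  rcases le_or_gt a Real.pi with hcase | hcase
  · exact Real.cos_le_cos_of_nonneg_of_le_pi hspos.le hcase hsle
  · have h1 : Real.cos a = Real.cos (2 * Real.pi - a) := by
      rw [Real.cos_two_pi_sub]
    rw [h1]
    exact Real.cos_le_cos_of_nonneg_of_le_pi hspos.le (by linarith) (by linarith)

/-- Let `k ≥ 3`, `ζ = exp(2πi/k)`, and let `T = ρ(c)` be a linear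
operator on an `n`-dimensional complex space equipped with a monomial structure
`e : Fin n → lines` (internal direct sum of `n` one-dimensional subspaces) which `T`
permutes, acting on each fixed line by a `k`-th root of unity.  If `tr T = n - 1 + ζ`,
then `T` fixes every line of the monomial structure. -/
theorem stmt11 (k n : ℕ) (hk : 3 ≤ k) (V : Type*) [AddCommGroup V] [Module ℂ V]
    [FiniteDimensional ℂ V] [DecidableEq (Fin n)]
    (T : V →ₗ[ℂ] V) (e : Fin n → Submodule ℂ V)
    (he : Function.Injective e)
    (hdim : ∀ i, Module.finrank ℂ (e i) = 1)
    (hint : DirectSum.IsInternal e)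
    (hperm : ∀ i, ∃ j, Submodule.map T (e i) = e j)
    (hfix : ∀ i, Submodule.map T (e i) = e i →
      ∃ z : ℂ, z ^ k = 1 ∧ ∀ v ∈ e i, T v = z • v)
    (htr : LinearMap.trace ℂ V T =
      (n : ℂ) - 1 + Complex.exp (2 * Real.pi * Complex.I / k)) :
    ∀ i, Submodule.map T (e i) = e i := by
  classical
  by_contra hcon
  push_neg at hcon
  obtain ⟨i0, hi0⟩ := hcon
  -- choose the scalars
  have hzex : ∀ i, ∃ z : ℂ, Submodule.map T (e i) = e i →
      z ^ k = 1 ∧ ∀ v ∈ e i, T v = z • v := by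
    intro i
    by_cases h : Submodule.map T (e i) = e i
    · obtain ⟨z, hz⟩ := hfix i h; exact ⟨z, fun _ => hz⟩
    · exact ⟨1, fun h' => absurd h' h⟩
  choose z hz using hzex
  -- basis
  let bs : ∀ i, Module.Basis (Fin 1) ℂ (e i) := fun i => Module.finBasisOfFinrankEq ℂ _ (hdim i)
  let b : Module.Basis ((i : Fin n) × Fin 1) ℂ V := hint.collectedBasis bs
  have hbmem : ∀ i, (b ⟨i, 0⟩ : V) ∈ e i := fun i => hint.collectedBasis_mem bs ⟨i, 0⟩
  -- compute trace
  have hdiag : ∀ i : Fin n, b.repr (T (b ⟨i, 0⟩)) ⟨i, 0⟩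
      = if Submodule.map T (e i) = e i then z i else 0 := by
    intro i
    by_cases h : Submodule.map T (e i) = e i
    · rw [if_pos h]
      have hv : T (b ⟨i, 0⟩) = z i • b ⟨i, 0⟩ := (hz i h).2 _ (hbmem i)
      rw [hv, map_smul]
      simp [Module.Basis.repr_self]
    · rw [if_neg h]
      obtain ⟨j, hj⟩ := hperm i
      have hji : j ≠ i := by rintro rfl; exact h hj
      have hmem : T (b ⟨i, 0⟩) ∈ e j := by
        rw [← hj]; exact Submodule.mem_map_of_mem (hbmem i)
      exact hint.collectedBasis_repr_of_mem_ne bs hji hmem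
  have htr2 : LinearMap.trace ℂ V T
      = ∑ i : Fin n, if Submodule.map T (e i) = e i then z i else 0 := by
    rw [LinearMap.trace_eq_matrix_trace ℂ b T, Matrix.trace]
    rw [← Finset.univ_sigma_univ, Finset.sum_sigma]
    refine Finset.sum_congr rfl fun i _ => ?_
    rw [Fin.sum_univ_one]
    rw [Matrix.diag_apply, LinearMap.toMatrix_apply]
    exact hdiag i
  set F : Finset (Fin n) := Finset.univ.filter (fun i => Submodule.map T (e i) = e i) with hF
  have htr3 : (∑ i ∈ F, z i) = (n : ℂ) - 1 + Complex.exp (2 * Real.pi * Complex.I / k) := by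
    rw [← htr, htr2, ← Finset.sum_filter]
  -- angle facts
  set θ : ℝ := 2 * Real.pi / k with hθ
  have hkR : (0:ℝ) < k := by positivity
  have hθpos : 0 < θ := by positivity
  have hθltpi : θ < Real.pi := by
    rw [hθ, div_lt_iff₀ hkR]
    have : (3:ℝ) ≤ k := by exact_mod_cast hk
    nlinarith [Real.pi_pos]
  have hexp : Complex.exp (2 * Real.pi * Complex.I / k)
      = Complex.exp ((θ : ℝ) * Complex.I) := by
    congr 1
    rw [hθ]
    push_cast [Complex.ofReal_div, Complex.ofReal_mul]
    ring
  have hre : (∑ i ∈ F, z i).re = (n : ℝ) - 1 + Real.cos θ := by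
    rw [htr3, hexp]
    simp [Complex.add_re, Complex.sub_re, Complex.exp_ofReal_mul_I_re]
  have him : (∑ i ∈ F, z i).im = Real.sin θ := by
    rw [htr3, hexp]
    simp [Complex.exp_ofReal_mul_I_im]
  have hresum : (∑ i ∈ F, (z i).re) = (n : ℝ) - 1 + Real.cos θ := by
    rw [← hre, Complex.re_sum]
  have himsum : (∑ i ∈ F, (z i).im) = Real.sin θ := by
    rw [← him, Complex.im_sum]
  -- facts about each z i
  have hzroot : ∀ i ∈ F, (z i) ^ k = 1 := by
    intro i hi
    rw [hF, Finset.mem_filter] at hi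
    exact (hz i hi.2).1
  have hrebnd : ∀ i ∈ F, (z i).re ≤ 1 := by
    intro i hi
    have h1 : ‖z i‖ = 1 := Complex.norm_eq_one_of_pow_eq_one (hzroot i hi) (by omega)
    calc (z i).re ≤ ‖z i‖ := Complex.re_le_norm _
    _ = 1 := h1
  -- card bound
  have hFcard : (F.card : ℝ) ≤ (n : ℝ) - 1 := by
    have hsub : F ⊆ Finset.univ.erase i0 := by
      intro i hi
      rw [hF, Finset.mem_filter] at hi
      refine Finset.mem_erase.2 ⟨?_, Finset.mem_univ _⟩
      rintro rfl; exact hi0 hi.2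
    have := Finset.card_le_card hsub
    rw [Finset.card_erase_of_mem (Finset.mem_univ _), Finset.card_univ, Fintype.card_fin] at this
    have hn1 : 1 ≤ n := Nat.one_le_iff_ne_zero.2 (by rintro rfl; exact absurd i0.2 (by simp))
    have : (F.card : ℝ) ≤ ((n - 1 : ℕ) : ℝ) := by exact_mod_cast this
    rwa [Nat.cast_sub hn1, Nat.cast_one] at this
  -- case: is there i1 in F with z i1 ≠ 1?
  by_cases hall : ∀ i ∈ F, z i = 1
  · -- all ones: imaginary part zero
    have : (∑ i ∈ F, (z i).im) = 0 := by
      rw [Finset.sum_congr rfl (fun i hi => by rw [hall i hi])]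
      simp
    rw [himsum] at this
    have := Real.sin_pos_of_pos_of_lt_pi hθpos hθltpi
    linarith
  · push_neg at hall
    obtain ⟨i1, hi1F, hi1⟩ := hall
    have hsum1 : (∑ i ∈ F, ((1:ℝ) - (z i).re)) ≥ 1 - Real.cos θ := by
      have h1 : (1:ℝ) - Real.cos θ ≤ 1 - (z i1).re := by
        have := root_re_le k hk (hzroot i1 hi1F) hi1
        linarith
      refine le_trans h1 (Finset.single_le_sum (f := fun i => (1:ℝ) - (z i).re) (fun i hi => ?_) hi1F)
      have := hrebnd i hi
      linarith
    have hsum2 : (∑ i ∈ F, ((1:ℝ) - (z i).re)) = (F.card : ℝ) - ((n : ℝ) - 1 + Real.cos θ) := by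
      rw [Finset.sum_sub_distrib, Finset.sum_const, nsmul_eq_mul, mul_one, hresum]
    rw [hsum2] at hsum1
    linarith
end
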